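/- Let n ≥ 2, R > 0, M = ⌊2^{nR}⌋, and let S be a random variable with cumulative distribution function P(S ≤ s) = (1 − Q_n(s))^M on [−1, 1]. Define Δ₁ = √( (S − √(1 − 2^{−2R}))² + (√(1 − S²) − 2^{−R})² ). Then for all p ≥ 1, (E[(√n Δ₁)^p])^{1/p} ≤ C √p, where C is a constant depending only on R. -/

import Mathlib

open MeasureTheory ProbabilityTheory Real
open scoped RealInnerProductSpace ENNReal NNReal

noncomputable section

/-- The standard Gaussian measure `N(0, I_n)` on `ℝⁿ` (as Euclidean space). -/
def stdGaussian (n : ℕ) : Measure (EuclideanSpace ℝ (Fin n)) :=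
  Measure.map (MeasurableEquiv.toLp 2 (Fin n → ℝ))
    (Measure.pi fun _ : Fin n => gaussianReal 0 1)

/-- The uniform distribution on the unit sphere of `ℝⁿ` (as a measure on `ℝⁿ`),
realized as the law of `W/‖W‖` for a standard Gaussian vector `W`;
this is the normalized rotation-invariant measure on the sphere. -/
def uniformSphere (n : ℕ) : Measure (EuclideanSpace ℝ (Fin n)) :=
  Measure.map (fun w => ‖w‖⁻¹ • w) (stdGaussian n)

/-- Given a codebook `c` of `M` codewords, the codeword maximizing the cosine
similarity with `x` (an arbitrary codeword is used for ties or `x = 0`;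
junk value `0` if `M = 0`). -/
def bestCodeword {n M : ℕ} (x : EuclideanSpace ℝ (Fin n))
    (c : Fin M → EuclideanSpace ℝ (Fin n)) : EuclideanSpace ℝ (Fin n) :=
  match (List.finRange M).argmax (fun i => ⟪c i, x⟫ / (‖c i‖ * ‖x‖)) with
  | some i => c i
  | none => 0

/-- The number of codewords `M = ⌊2^{nR}⌋` of a bitrate-`R` random spherical
code in dimension `n`. -/
def numCodewords (n : ℕ) (R : ℝ) : ℕ := ⌊(2 : ℝ) ^ ((n : ℝ) * R)⌋₊

/-- The law (marginalized over the random codebook, drawn i.i.d. uniformly on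
the unit sphere) of the output of a bitrate-`R` random spherical code with
input `x` and magnitude `ρ`. -/
def rscLaw (n : ℕ) (R : ℝ) (ρ : ℝ) (x : EuclideanSpace ℝ (Fin n)) :
    Measure (EuclideanSpace ℝ (Fin n)) :=
  Measure.map (fun c : Fin (numCodewords n R) → EuclideanSpace ℝ (Fin n) =>
      ρ • bestCodeword x c)
    (Measure.pi fun _ => uniformSphere n)

end
/-- The normalizing constant `κ_n = Γ(n/2)/(√π·Γ((n-1)/2))`. -/
noncomputable def kappaConst (n : ℕ) : ℝ :=
  Real.Gamma ((n : ℝ) / 2) / (Real.sqrt Real.pi * Real.Gamma (((n : ℝ) - 1) / 2))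

/-- `Q_n(g) = κ_n ∫_g^1 (1 - t²)^{(n-3)/2} dt`, the complementary CDF of the
cosine similarity between a fixed vector and a uniform point on the unit
sphere of `ℝⁿ`. -/
noncomputable def Qfun (n : ℕ) (g : ℝ) : ℝ :=
  kappaConst n * ∫ t in g..1, (1 - t ^ 2) ^ (((n : ℝ) - 3) / 2)

/-- The uniform (normalized rotation-invariant) distribution on the unit sphere
of the hyperplane orthogonal to `x`, i.e. on `{h : ‖h‖ = 1, ⟪x, h⟫ = 0}`,
realized by normalizing the orthogonal projection of a standard Gaussian. -/
noncomputable def uniformOrthSphere {n : ℕ} (x : EuclideanSpace ℝ (Fin n)) :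
    Measure (EuclideanSpace ℝ (Fin n)) :=
  Measure.map (fun w =>
      ‖(((Submodule.span ℝ {x})ᗮ).orthogonalProjectionOnto w :
          EuclideanSpace ℝ (Fin n))‖⁻¹ •
        (((Submodule.span ℝ {x})ᗮ).orthogonalProjectionOnto w :
          EuclideanSpace ℝ (Fin n)))
    (stdGaussian n)

/-!
Write `b = 2^{-R}`, `a = √(1 - b²)` and `c = (n - 3)/2`. With `M = ⌊2^{nR}⌋` the product
`M b^{n-3}` lies between `1/2` and `2^{3R}`, and since `κ_n ≍ √n`, `Q_n(σ)` is `(1 - σ²)^c` up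
to polynomial factors. Hence `M Q_n(a + u/2) ≲ √n (1 - a u / b²)^c` is exponentially small and
`M Q_n(a - u) ≳ √n u (1 + a u / 2b²)^c` (for `u ≤ a b²`) exponentially large in `n u`; through
`P(S ≤ s) = (1 - Q_n(s))^M` this gives `P(|S - a| ≥ u) ≤ 2 e^{-γ n u}` with `γ = a / 16b²`, for
`u ≥ 1/√n` and `n` large. On the unit circle `Δ₁ ≤ √(1 + 4/b²) |S - a|`, so `√n Δ₁` has tails
`e^{-γ √n t}` and its `p`-th moment is `O(p / √n)^p ≤ O(√p)^p` for `p ≤ n`. For `p > n`, and for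
the finitely many small `n`, the trivial bound `√n Δ₁ ≤ 2√n` suffices.
-/

open Filter Set

lemma rpow_mul_exp_neg_mul_le {x s p : ℝ} (hx : 0 ≤ x) (hs : 0 < s) (hp : 0 < p) :
    x ^ p * exp (-(s * x)) ≤ (p / s) ^ p := by
  have key : x * exp (-(s * x / p)) ≤ p / s := by
    have hy : s * x / p ≤ exp (s * x / p) := by linarith [add_one_le_exp (s * x / p)]
    rw [exp_neg, ← div_eq_mul_inv, div_le_div_iff₀ (exp_pos _) hs]
    rw [div_le_iff₀ hp] at hy
    linarith
  calc x ^ p * exp (-(s * x)) = (x * exp (-(s * x / p))) ^ p := by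
        rw [mul_rpow hx (exp_pos _).le, ← exp_mul]
        field_simp
    _ ≤ (p / s) ^ p := by gcongr

lemma exp_half_le_one_add {x : ℝ} (hx : 0 ≤ x) (hx1 : x ≤ 1) : exp (x / 2) ≤ 1 + x := by
  have h := add_one_le_exp (-(x / 2))
  rw [exp_neg] at h
  have hinv := mul_inv_cancel₀ (exp_pos (x / 2)).ne'
  nlinarith [exp_pos (x / 2)]

lemma abs_one_sub_le_exp_neg {q : ℝ} (hq0 : 0 ≤ q) (hq : q ≤ 3 / 2) :
    |1 - q| ≤ exp (-(q / 3)) := by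
  rcases le_total q 1 with hq1 | hq1
  · rw [abs_of_nonneg (by linarith)]
    linarith [add_one_le_exp (-q), exp_le_exp.2 (by linarith : -q ≤ -(q / 3))]
  · rw [abs_of_nonpos (by linarith)]
    linarith [add_one_le_exp (-(1 / 2)), exp_le_exp.2 (by linarith : -(1 / 2) ≤ -(q / 3))]

lemma one_sub_pow_le_exp_neg {q : ℝ} (hq0 : 0 ≤ q) (hq : q ≤ 3 / 2) (M : ℕ) :
    (1 - q) ^ M ≤ exp (-(M * q / 3)) :=
  calc (1 - q) ^ M ≤ |1 - q| ^ M := by rw [← abs_pow]; exact le_abs_self _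
    _ ≤ exp (-(q / 3)) ^ M := by gcongr; exact abs_one_sub_le_exp_neg hq0 hq
    _ = exp (-(M * q / 3)) := by rw [← exp_nat_mul]; ring_nf

lemma eventually_mul_sqrt_le_exp {δ : ℝ} (hδ : 0 < δ) (A : ℝ) :
    ∀ᶠ n : ℕ in atTop, A * √n ≤ exp (δ * √n) := by
  have hreal : ∀ᶠ x : ℝ in atTop, A * x ≤ exp (δ * x) := by
    filter_upwards [(isLittleO_pow_exp_pos_mul_atTop 1 hδ).bound
      (c := 1 / (|A| + 1)) (by positivity), eventually_ge_atTop 0] with x hx hx0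
    simp only [pow_one, norm_eq_abs, abs_of_nonneg hx0, abs_of_pos (exp_pos _)] at hx
    calc A * x ≤ (|A| + 1) * x := by gcongr; linarith [le_abs_self A]
      _ ≤ exp (δ * x) := by
        rw [div_mul_eq_mul_div, one_mul, le_div_iff₀ (by positivity)] at hx
        linarith
  exact (tendsto_sqrt_atTop.comp tendsto_natCast_atTop_atTop).eventually hreal

lemma rpow_one_div_le_of_le_mul_rpow {I A X p : ℝ} (hI : 0 ≤ I) (hA : 1 ≤ A) (hX : 0 ≤ X)
    (hp : 1 ≤ p) (h : I ≤ A * X ^ p) : I ^ (1 / p) ≤ A * X :=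
  calc I ^ (1 / p) ≤ (A * X ^ p) ^ (1 / p) := by gcongr
    _ = A ^ (1 / p) * X := by
        rw [mul_rpow (by linarith) (by positivity), ← rpow_mul hX, mul_one_div_cancel (by linarith),
          rpow_one]
    _ ≤ A * X := by
        gcongr
        exact rpow_le_self_of_one_le hA (by rw [div_le_one (by linarith)]; exact hp)

lemma sq_rpow_half_sub_three {b : ℝ} (hb : 0 ≤ b) (n : ℕ) :
    (b ^ 2) ^ (((n : ℝ) - 3) / 2) = b ^ ((n : ℝ) - 3) := by
  rw [← rpow_natCast, ← rpow_mul hb]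
  norm_num
  ring_nf

lemma Gamma_add_half_le {x : ℝ} (hx : 0 < x) : Gamma (x + 1 / 2) ≤ √x * Gamma x := by
  have h := Gamma_mul_add_mul_le_rpow_Gamma_mul_rpow_Gamma hx (by linarith : 0 < x + 1)
    one_half_pos one_half_pos (by norm_num)
  rw [Gamma_add_one hx.ne', mul_rpow hx.le (Gamma_pos_of_pos hx).le, ← sqrt_eq_rpow,
    ← sqrt_eq_rpow, mul_left_comm, mul_self_sqrt (Gamma_pos_of_pos hx).le] at h
  convert h using 2; ring

lemma mul_Gamma_le {x : ℝ} (hx : 0 < x) : x * Gamma x ≤ √(x + 1 / 2) * Gamma (x + 1 / 2) := by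
  have h := Gamma_add_half_le (by linarith : 0 < x + 1 / 2)
  rwa [add_assoc, add_halves, Gamma_add_one hx.ne'] at h

lemma kappaConst_le {n : ℕ} (hn : 2 ≤ n) : kappaConst n ≤ √(((n : ℝ) - 1) / 2) / √π := by
  have hx : 0 < ((n : ℝ) - 1) / 2 := by
    have : (2 : ℝ) ≤ n := by exact_mod_cast hn
    linarith
  rw [kappaConst, show (n : ℝ) / 2 = ((n : ℝ) - 1) / 2 + 1 / 2 by ring,
    div_le_div_iff₀ (by positivity) (sqrt_pos.2 pi_pos)]
  calc Gamma (((n : ℝ) - 1) / 2 + 1 / 2) * √π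
      ≤ √(((n : ℝ) - 1) / 2) * Gamma (((n : ℝ) - 1) / 2) * √π := by
        gcongr; exact Gamma_add_half_le hx
    _ = _ := by ring

lemma kappaConst_le_sqrt {n : ℕ} (hn : 2 ≤ n) : kappaConst n ≤ √n := by
  have hπ : 1 ≤ √π := one_le_sqrt.2 (by linarith [pi_gt_three])
  calc kappaConst n ≤ √(((n : ℝ) - 1) / 2) / √π := kappaConst_le hn
    _ ≤ √(((n : ℝ) - 1) / 2) := div_le_self (sqrt_nonneg _) hπ
    _ ≤ √n := sqrt_le_sqrt (by linarith)

lemma sqrt_div_six_le_kappaConst {n : ℕ} (hn : 2 ≤ n) : √n / 6 ≤ kappaConst n := by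
  have hn' : (2 : ℝ) ≤ n := by exact_mod_cast hn
  set x := ((n : ℝ) - 1) / 2 with hx_def
  have hx : 0 < x := by linarith
  have hhalf : (n : ℝ) / 2 = x + 1 / 2 := by ring
  have hconst : √n * √π * √(x + 1 / 2) ≤ 6 * x := by
    rw [← hhalf, ← sqrt_mul (by positivity), ← sqrt_mul (by positivity)]
    refine sqrt_le_iff.2 ⟨by positivity, ?_⟩
    rw [hx_def]
    nlinarith [mul_le_mul_of_nonneg_left pi_lt_four.le (sq_nonneg (n : ℝ))]
  have hΓ : x * (√n / 6 * (√π * Gamma x)) ≤ x * Gamma (x + 1 / 2) := by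
    have := Gamma_pos_of_pos (by linarith : 0 < x + 1 / 2)
    calc x * (√n / 6 * (√π * Gamma x)) = √n * √π / 6 * (x * Gamma x) := by ring
      _ ≤ √n * √π / 6 * (√(x + 1 / 2) * Gamma (x + 1 / 2)) :=
          mul_le_mul_of_nonneg_left (mul_Gamma_le hx) (by positivity)
      _ ≤ x * Gamma (x + 1 / 2) := by nlinarith
  rw [kappaConst, hhalf, le_div_iff₀ (by have := Gamma_pos_of_pos hx; positivity)]
  exact le_of_mul_le_mul_left hΓ hx

section OneSubSqRpow

variable {c : ℝ}

lemma intervalIntegrable_one_sub_sq_rpow (hc : 0 ≤ c) (s t : ℝ) :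
    IntervalIntegrable (fun u : ℝ => (1 - u ^ 2) ^ c) volume s t :=
  ((continuous_rpow_const hc).comp (by fun_prop)).intervalIntegrable s t

lemma integral_one_sub_sq_rpow_nonneg {s : ℝ} (hs : -1 ≤ s) (hs1 : s ≤ 1) :
    0 ≤ ∫ t in s..1, (1 - t ^ 2) ^ c :=
  intervalIntegral.integral_nonneg hs1 fun t ht => rpow_nonneg (by nlinarith [ht.1, ht.2]) c

lemma integral_one_sub_sq_rpow_le_sqrt (hc : 0 < c) {s : ℝ} (hs : -1 ≤ s) (hs1 : s ≤ 1) :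
    ∫ t in s..1, (1 - t ^ 2) ^ c ≤ √(π / c) := by
  calc ∫ t in s..1, (1 - t ^ 2) ^ c ≤ ∫ t in s..1, exp (-c * t ^ 2) := by
        refine intervalIntegral.integral_mono_on hs1 (intervalIntegrable_one_sub_sq_rpow hc.le _ _)
          (integrable_exp_neg_mul_sq hc).intervalIntegrable fun t ht => ?_
        calc (1 - t ^ 2) ^ c ≤ exp (-t ^ 2) ^ c := by
              gcongr
              · nlinarith [ht.1, ht.2]
              · linarith [add_one_le_exp (-t ^ 2)]
          _ = exp (-c * t ^ 2) := by rw [← exp_mul]; ring_nf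
    _ ≤ ∫ t, exp (-c * t ^ 2) := by
        rw [intervalIntegral.integral_of_le hs1]
        exact setIntegral_le_integral (integrable_exp_neg_mul_sq hc)
          (.of_forall fun t => (exp_pos _).le)
    _ = √(π / c) := integral_gaussian c

lemma integral_one_sub_sq_rpow_le (hc : 0 ≤ c) {σ : ℝ} (hσ : 0 ≤ σ) (hσ1 : σ ≤ 1) :
    ∫ t in σ..1, (1 - t ^ 2) ^ c ≤ (1 - σ ^ 2) ^ c := by
  have h := intervalIntegral.integral_mono_on hσ1 (intervalIntegrable_one_sub_sq_rpow hc _ _)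
    intervalIntegrable_const fun t ht => by
      show (1 - t ^ 2) ^ c ≤ (1 - σ ^ 2) ^ c
      gcongr <;> nlinarith [ht.1, ht.2]
  rw [intervalIntegral.integral_const, smul_eq_mul] at h
  nlinarith [rpow_nonneg (by nlinarith : 0 ≤ 1 - σ ^ 2) c]

lemma le_integral_one_sub_sq_rpow (hc : 0 ≤ c) {σ h : ℝ} (hσ : 0 ≤ σ) (hh : 0 ≤ h)
    (hσh : σ + h ≤ 1) :
    h * (1 - (σ + h) ^ 2) ^ c ≤ ∫ t in σ..1, (1 - t ^ 2) ^ c := by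
  have hfirst := intervalIntegral.integral_mono_on (by linarith : σ ≤ σ + h)
    intervalIntegrable_const (intervalIntegrable_one_sub_sq_rpow hc _ _) fun t ht => by
      show (1 - (σ + h) ^ 2) ^ c ≤ (1 - t ^ 2) ^ c
      gcongr <;> nlinarith [ht.1, ht.2]
  rw [intervalIntegral.integral_const, smul_eq_mul, add_sub_cancel_left] at hfirst
  rw [← intervalIntegral.integral_add_adjacent_intervals (b := σ + h)
    (intervalIntegrable_one_sub_sq_rpow hc _ _) (intervalIntegrable_one_sub_sq_rpow hc _ _)]
  linarith [integral_one_sub_sq_rpow_nonneg (c := c) (by linarith : -1 ≤ σ + h) hσh]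

end OneSubSqRpow

/- `Q_n(-1) = 1` would need the Beta integral; comparing with a Gaussian gives `3/2`, which is
all that `one_sub_pow_le_exp_neg` needs. -/
lemma Qfun_le_three_halves {n : ℕ} (hn : 6 ≤ n) {s : ℝ} (hs : -1 ≤ s) (hs1 : s ≤ 1) :
    Qfun n s ≤ 3 / 2 := by
  have hn' : (6 : ℝ) ≤ n := by exact_mod_cast hn
  have hc : 0 < ((n : ℝ) - 3) / 2 := by linarith
  calc Qfun n s ≤ √(((n : ℝ) - 1) / 2) / √π * √(π / (((n : ℝ) - 3) / 2)) :=
        mul_le_mul (kappaConst_le (by omega)) (integral_one_sub_sq_rpow_le_sqrt hc hs hs1)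
          (integral_one_sub_sq_rpow_nonneg hs hs1) (by positivity)
    _ = √((n - 1) / (n - 3)) := by
        rw [← sqrt_div' _ pi_pos.le, ← sqrt_mul (div_nonneg (by linarith) pi_pos.le)]
        congr 1
        field_simp
    _ ≤ 3 / 2 := by
        refine sqrt_le_iff.2 ⟨by norm_num, ?_⟩
        rw [div_le_iff₀ (by linarith)]
        linarith

lemma Qfun_le {n : ℕ} (hn : 3 ≤ n) {σ : ℝ} (hσ : 0 ≤ σ) (hσ1 : σ ≤ 1) :
    Qfun n σ ≤ √n * (1 - σ ^ 2) ^ (((n : ℝ) - 3) / 2) := by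
  have hc : 0 ≤ ((n : ℝ) - 3) / 2 := by
    have : (3 : ℝ) ≤ n := by exact_mod_cast hn
    linarith
  exact mul_le_mul (kappaConst_le_sqrt (by omega)) (integral_one_sub_sq_rpow_le hc hσ hσ1)
    (integral_one_sub_sq_rpow_nonneg (by linarith) hσ1) (sqrt_nonneg _)

lemma le_Qfun {n : ℕ} (hn : 3 ≤ n) {σ h : ℝ} (hσ : 0 ≤ σ) (hh : 0 ≤ h) (hσh : σ + h ≤ 1) :
    √n / 6 * h * (1 - (σ + h) ^ 2) ^ (((n : ℝ) - 3) / 2) ≤ Qfun n σ := by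
  have hc : 0 ≤ ((n : ℝ) - 3) / 2 := by
    have : (3 : ℝ) ≤ n := by exact_mod_cast hn
    linarith
  have hκ := sqrt_div_six_le_kappaConst (n := n) (by omega)
  rw [mul_assoc]
  exact mul_le_mul hκ (le_integral_one_sub_sq_rpow hc hσ hh hσh)
    (mul_nonneg hh (rpow_nonneg (by nlinarith) _)) ((by positivity : (0 : ℝ) ≤ √n / 6).trans hκ)

lemma one_sub_ofReal_one_sub_pow_le (q : ℝ) (M : ℕ) :
    1 - ENNReal.ofReal ((1 - q) ^ M) ≤ ENNReal.ofReal (M * q) := by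
  rcases Nat.eq_zero_or_pos M with rfl | hM
  · simp
  rcases le_or_gt q 1 with hq | hq
  · have hBernoulli : 1 - M * q ≤ (1 - q) ^ M := by
      simpa [sub_eq_add_neg] using one_add_mul_le_pow (by linarith : (-2 : ℝ) ≤ -q) M
    calc 1 - ENNReal.ofReal ((1 - q) ^ M) ≤ 1 - ENNReal.ofReal (1 - M * q) := by gcongr
      _ ≤ ENNReal.ofReal (M * q) := by
          rw [tsub_le_iff_right, ← ENNReal.ofReal_one]
          exact (ENNReal.ofReal_le_ofReal (by linarith)).trans ENNReal.ofReal_add_le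
  · refine tsub_le_self.trans ?_
    rw [ENNReal.one_le_ofReal]
    nlinarith [(Nat.one_le_cast (α := ℝ)).2 hM]

lemma measure_Ioi_le_of_measure_Iic_eq {μ : Measure ℝ} [IsProbabilityMeasure μ] {σ q : ℝ}
    {M : ℕ} (h : μ (Iic σ) = ENNReal.ofReal ((1 - q) ^ M)) :
    μ (Ioi σ) ≤ ENNReal.ofReal (M * q) := by
  rw [← compl_Iic, prob_compl_eq_one_sub measurableSet_Iic, h]
  exact one_sub_ofReal_one_sub_pow_le q M

section Concentration

variable {n M : ℕ} {a b : ℝ}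

lemma sqrt_le_mul_of_one_le_mul_sqrt {u : ℝ} (hu : 1 ≤ u * √n) : √n ≤ n * u :=
  calc √n = √n * 1 := (mul_one _).symm
    _ ≤ √n * (u * √n) := mul_le_mul_of_nonneg_left hu (sqrt_nonneg _)
    _ = n * u := by rw [mul_left_comm, mul_self_sqrt (Nat.cast_nonneg _), mul_comm]

lemma Qfun_add_half_le (hn : 6 ≤ n) (hab : a ^ 2 + b ^ 2 = 1) (ha : 0 ≤ a) (hb : 0 < b)
    {u : ℝ} (hu : 0 ≤ u) (hu1 : a + u / 2 ≤ 1) :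
    Qfun n (a + u / 2) ≤ b ^ ((n : ℝ) - 3) * √n * exp (-(4 * (a / (16 * b ^ 2)) * n * u)) := by
  have hn' : (6 : ℝ) ≤ n := by exact_mod_cast hn
  have hbase : 1 - (a + u / 2) ^ 2 ≤ b ^ 2 * exp (-(a * u / b ^ 2)) := by
    have := add_one_le_exp (-(a * u / b ^ 2))
    have : b ^ 2 * (1 - a * u / b ^ 2) = b ^ 2 - a * u := by field_simp
    nlinarith
  calc Qfun n (a + u / 2) ≤ √n * (1 - (a + u / 2) ^ 2) ^ (((n : ℝ) - 3) / 2) :=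
        Qfun_le (by omega) (by positivity) hu1
    _ ≤ √n * (b ^ 2 * exp (-(a * u / b ^ 2))) ^ (((n : ℝ) - 3) / 2) := by
        gcongr
        · nlinarith
        · linarith
    _ = b ^ ((n : ℝ) - 3) * √n * exp (-(a * u / b ^ 2) * (((n : ℝ) - 3) / 2)) := by
        rw [mul_rpow (by positivity) (exp_pos _).le, sq_rpow_half_sub_three hb.le, ← exp_mul]
        ring
    _ ≤ b ^ ((n : ℝ) - 3) * √n * exp (-(4 * (a / (16 * b ^ 2)) * n * u)) := by
        refine mul_le_mul_of_nonneg_left (exp_le_exp.2 ?_) (by positivity)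
        rw [neg_mul, neg_le_neg_iff]
        calc 4 * (a / (16 * b ^ 2)) * n * u = a * u / b ^ 2 * ((n : ℝ) / 4) := by ring
          _ ≤ a * u / b ^ 2 * (((n : ℝ) - 3) / 2) :=
            mul_le_mul_of_nonneg_left (by linarith) (by positivity)

lemma sqrt_mul_exp_le_Qfun (hn : 6 ≤ n) (hab : a ^ 2 + b ^ 2 = 1) (ha : 0 ≤ a) (hb : 0 < b)
    {v : ℝ} (hv : 0 ≤ v) (hvab : v ≤ a * b ^ 2) :
    b ^ ((n : ℝ) - 3) * (√n * v / 12) * exp (a / (16 * b ^ 2) * n * v) ≤ Qfun n (a - v) := by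
  have hn' : (6 : ℝ) ≤ n := by exact_mod_cast hn
  have hb1 : b ^ 2 ≤ 1 := by nlinarith
  have ha1 : a ≤ 1 := by nlinarith
  have hva : v ≤ a := by nlinarith
  set x := a * v / (2 * b ^ 2) with hx_def
  have hx0 : 0 ≤ x := by positivity
  have hx1 : x ≤ 1 := by
    rw [hx_def, div_le_one (by positivity)]
    nlinarith
  have hbase : b ^ 2 * (1 + x) ≤ 1 - (a - v + v / 2) ^ 2 := by
    have : b ^ 2 * (1 + x) = b ^ 2 + a * v / 2 := by rw [hx_def]; field_simp
    nlinarith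
  have hpow : exp (x / 2) ^ (((n : ℝ) - 3) / 2) ≤ (1 + x) ^ (((n : ℝ) - 3) / 2) :=
    rpow_le_rpow (exp_pos _).le (exp_half_le_one_add hx0 hx1) (by linarith)
  calc b ^ ((n : ℝ) - 3) * (√n * v / 12) * exp (a / (16 * b ^ 2) * n * v)
      ≤ b ^ ((n : ℝ) - 3) * (√n * v / 12) * exp (x / 2 * (((n : ℝ) - 3) / 2)) := by
        refine mul_le_mul_of_nonneg_left (exp_le_exp.2 ?_) (by positivity)
        calc a / (16 * b ^ 2) * n * v = x / 2 * ((n : ℝ) / 4) := by rw [hx_def]; ring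
          _ ≤ x / 2 * (((n : ℝ) - 3) / 2) :=
            mul_le_mul_of_nonneg_left (by linarith) (by positivity)
    _ = √n / 6 * (v / 2) * (b ^ ((n : ℝ) - 3) * exp (x / 2) ^ (((n : ℝ) - 3) / 2)) := by
        rw [exp_mul]; ring
    _ ≤ √n / 6 * (v / 2) * (b ^ 2 * (1 + x)) ^ (((n : ℝ) - 3) / 2) := by
        rw [mul_rpow (by positivity) (by positivity), sq_rpow_half_sub_three hb.le]
        gcongr
    _ ≤ √n / 6 * (v / 2) * (1 - (a - v + v / 2) ^ 2) ^ (((n : ℝ) - 3) / 2) := by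
        gcongr
        linarith
    _ ≤ Qfun n (a - v) := le_Qfun (by omega) (by linarith) (by linarith) (by linarith)

lemma three_mul_le_mul_Qfun_sub (hn : 6 ≤ n) (hab : a ^ 2 + b ^ 2 = 1) (ha : 0 ≤ a)
    (hb : 0 < b) (hM : 1 / 2 ≤ M * b ^ ((n : ℝ) - 3))
    (hexp : 9 / b ^ 4 * √n ≤ exp (a ^ 2 / 16 * √n)) {u v : ℝ} (hv : 0 ≤ v)
    (hvab : v ≤ a * b ^ 2) (hvu : a * b ^ 2 * u ≤ 2 * v) (hnv : a * b ^ 2 * √n ≤ n * v) :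
    3 * (a / (16 * b ^ 2) * n * u) ≤ M * Qfun n (a - v) := by
  set γ := a / (16 * b ^ 2) with hγ
  calc 3 * (γ * n * u) = 3 * n * (a * b ^ 2 * u) / (16 * b ^ 4) := by rw [hγ]; field_simp
    _ ≤ 3 * n * (2 * v) / (16 * b ^ 4) := by gcongr
    _ = 1 / 2 * (√n * v / 12) * (9 / b ^ 4 * √n) := by
        field_simp
        rw [sq_sqrt (Nat.cast_nonneg _)]
        ring
    _ ≤ M * b ^ ((n : ℝ) - 3) * (√n * v / 12) * exp (γ * n * v) := by
        gcongr
        refine hexp.trans (exp_le_exp.2 ?_)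
        calc a ^ 2 / 16 * √n = γ * (a * b ^ 2 * √n) := by rw [hγ]; field_simp
          _ ≤ γ * (n * v) := by gcongr
          _ = γ * n * v := by ring
    _ = M * (b ^ ((n : ℝ) - 3) * (√n * v / 12) * exp (γ * n * v)) := by ring
    _ ≤ M * Qfun n (a - v) := by gcongr; exact sqrt_mul_exp_le_Qfun hn hab ha hb hv hvab

variable {μ : Measure ℝ}

lemma measure_Iic_sub_le (hn : 6 ≤ n) (hab : a ^ 2 + b ^ 2 = 1) (ha : 0 < a) (hb : 0 < b)
    (hcdf : ∀ s ∈ Icc (-1 : ℝ) 1, μ (Iic s) = ENNReal.ofReal ((1 - Qfun n s) ^ M))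
    (hM : 1 / 2 ≤ M * b ^ ((n : ℝ) - 3)) (hexp : 9 / b ^ 4 * √n ≤ exp (a ^ 2 / 16 * √n))
    {u : ℝ} (hu : 1 ≤ u * √n) (hu2 : u ≤ 2) :
    μ (Iic (a - u)) ≤ ENNReal.ofReal (exp (-(a / (16 * b ^ 2) * n * u))) := by
  have hnu := sqrt_le_mul_of_one_le_mul_sqrt hu
  have hu0 : 0 ≤ u := by nlinarith [sqrt_nonneg (n : ℝ)]
  have hn1 : √n ≤ n := by
    have : (1 : ℝ) ≤ n := by exact_mod_cast (by omega : 1 ≤ n)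
    nlinarith [mul_self_sqrt (Nat.cast_nonneg (α := ℝ) n), sqrt_nonneg (n : ℝ)]
  have hab1 : a * b ^ 2 ≤ 1 := by nlinarith
  -- Truncating at `a b²` keeps `a - v ≥ 0` and the relative gain `a v / 2b²` below `1`.
  set v := min u (a * b ^ 2)
  have hv0 : 0 ≤ v := le_min hu0 (by positivity)
  have hvab : v ≤ a * b ^ 2 := min_le_right _ _
  have hvu : a * b ^ 2 * u ≤ 2 * v := by
    rcases min_choice u (a * b ^ 2) with h | h <;> simp only [v, h] <;> nlinarith
  have hnv : a * b ^ 2 * √n ≤ n * v := by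
    rcases min_choice u (a * b ^ 2) with h | h <;> simp only [v, h] <;>
      nlinarith [mul_le_mul_of_nonneg_right hab1 (sqrt_nonneg (n : ℝ))]
  have hq0 : 0 ≤ Qfun n (a - v) :=
    le_trans (by positivity) (sqrt_mul_exp_le_Qfun hn hab ha.le hb hv0 hvab)
  have hq32 : Qfun n (a - v) ≤ 3 / 2 := Qfun_le_three_halves hn (by nlinarith) (by nlinarith)
  have hkey := three_mul_le_mul_Qfun_sub hn hab ha.le hb hM hexp hv0 hvab hvu hnv
  calc μ (Iic (a - u)) ≤ μ (Iic (a - v)) :=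
        measure_mono (Iic_subset_Iic.2 (by linarith [min_le_left u (a * b ^ 2)]))
    _ = ENNReal.ofReal ((1 - Qfun n (a - v)) ^ M) := hcdf _ ⟨by nlinarith, by nlinarith⟩
    _ ≤ ENNReal.ofReal (exp (-(a / (16 * b ^ 2) * n * u))) :=
        ENNReal.ofReal_le_ofReal ((one_sub_pow_le_exp_neg hq0 hq32 M).trans
          (exp_le_exp.2 (by linarith)))

lemma measure_Ioi_add_half_le [IsProbabilityMeasure μ] (hn : 6 ≤ n) (hab : a ^ 2 + b ^ 2 = 1)
    (ha : 0 ≤ a) (hb : 0 < b) (hsupp : μ (Icc (-1 : ℝ) 1)ᶜ = 0)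
    (hcdf : ∀ s ∈ Icc (-1 : ℝ) 1, μ (Iic s) = ENNReal.ofReal ((1 - Qfun n s) ^ M))
    (hM : M * b ^ ((n : ℝ) - 3) * √n ≤ exp (3 * (a / (16 * b ^ 2)) * √n))
    {u : ℝ} (hu : 1 ≤ u * √n) :
    μ (Ioi (a + u / 2)) ≤ ENNReal.ofReal (exp (-(a / (16 * b ^ 2) * n * u))) := by
  have hnu := sqrt_le_mul_of_one_le_mul_sqrt hu
  have hu0 : 0 ≤ u := by nlinarith [sqrt_nonneg (n : ℝ)]
  rcases le_or_gt (a + u / 2) 1 with h1 | h1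
  · refine (measure_Ioi_le_of_measure_Iic_eq (hcdf _ ⟨by linarith, h1⟩)).trans
      (ENNReal.ofReal_le_ofReal ?_)
    set γ := a / (16 * b ^ 2)
    calc M * Qfun n (a + u / 2) ≤ M * (b ^ ((n : ℝ) - 3) * √n * exp (-(4 * γ * n * u))) := by
          gcongr; exact Qfun_add_half_le hn hab ha hb hu0 h1
      _ = M * b ^ ((n : ℝ) - 3) * √n * exp (-(4 * γ * n * u)) := by ring
      _ ≤ exp (3 * γ * (n * u)) * exp (-(4 * γ * n * u)) := by
          gcongr
          exact hM.trans (by gcongr)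
      _ = exp (-(γ * n * u)) := by rw [← exp_add]; ring_nf
  · have hnull : μ (Ioi (a + u / 2)) = 0 :=
      measure_mono_null (show Ioi (a + u / 2) ⊆ (Icc (-1 : ℝ) 1)ᶜ from
        fun s hs hs' => by linarith [hs.out, hs'.2]) hsupp
    simp [hnull]

theorem measure_le_abs_sub_le [IsProbabilityMeasure μ] (hn : 6 ≤ n) (hab : a ^ 2 + b ^ 2 = 1)
    (ha : 0 < a) (hb : 0 < b) (hsupp : μ (Icc (-1 : ℝ) 1)ᶜ = 0)
    (hcdf : ∀ s ∈ Icc (-1 : ℝ) 1, μ (Iic s) = ENNReal.ofReal ((1 - Qfun n s) ^ M))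
    (hM₁ : 1 / 2 ≤ M * b ^ ((n : ℝ) - 3))
    (hM₂ : M * b ^ ((n : ℝ) - 3) * √n ≤ exp (3 * (a / (16 * b ^ 2)) * √n))
    (hexp : 9 / b ^ 4 * √n ≤ exp (a ^ 2 / 16 * √n)) {u : ℝ} (hu : 1 ≤ u * √n) :
    μ {s | u ≤ |s - a|} ≤ ENNReal.ofReal (2 * exp (-(a / (16 * b ^ 2) * n * u))) := by
  rcases le_or_gt u 2 with hu2 | hu2
  · have hsplit : {s | u ≤ |s - a|} ⊆ Iic (a - u) ∪ Ioi (a + u / 2) := fun s hs => by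
      have : 0 < u := by nlinarith [sqrt_nonneg (n : ℝ)]
      rcases le_abs'.1 hs.out with h | h
      · exact Or.inl (show s ≤ a - u by linarith)
      · exact Or.inr (show a + u / 2 < s by linarith)
    calc μ {s | u ≤ |s - a|} ≤ μ (Iic (a - u)) + μ (Ioi (a + u / 2)) :=
          (measure_mono hsplit).trans (measure_union_le _ _)
      _ ≤ ENNReal.ofReal (exp (-(a / (16 * b ^ 2) * n * u)))
            + ENNReal.ofReal (exp (-(a / (16 * b ^ 2) * n * u))) :=
          add_le_add (measure_Iic_sub_le hn hab ha hb hcdf hM₁ hexp hu hu2)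
            (measure_Ioi_add_half_le hn hab ha.le hb hsupp hcdf hM₂ hu)
      _ = ENNReal.ofReal (2 * exp (-(a / (16 * b ^ 2) * n * u))) := by
          rw [← ENNReal.ofReal_add (exp_pos _).le (exp_pos _).le, two_mul]
  · have ha1 : a ≤ 1 := by nlinarith
    have hnull : μ {s | u ≤ |s - a|} = 0 :=
      measure_mono_null (show {s | u ≤ |s - a|} ⊆ (Icc (-1 : ℝ) 1)ᶜ from fun s hs hs' => by
        have := abs_le.2 (show -2 ≤ s - a ∧ s - a ≤ 2 by constructor <;> linarith [hs'.1, hs'.2])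
        linarith [hs.out]) hsupp
    simp [hnull]

end Concentration

lemma numCodewords_mul_rpow_le (n : ℕ) (R : ℝ) :
    numCodewords n R * (2 ^ (-R) : ℝ) ^ ((n : ℝ) - 3) ≤ 2 ^ (3 * R) := by
  calc numCodewords n R * (2 ^ (-R) : ℝ) ^ ((n : ℝ) - 3)
      ≤ (2 : ℝ) ^ ((n : ℝ) * R) * (2 ^ (-R) : ℝ) ^ ((n : ℝ) - 3) := by
        gcongr; exact Nat.floor_le (by positivity)
    _ = 2 ^ (3 * R) := by
        rw [← rpow_mul zero_le_two, ← rpow_add zero_lt_two]; ring_nf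

lemma half_le_numCodewords_mul_rpow (n : ℕ) {R : ℝ} (hR : 0 ≤ R) :
    1 / 2 ≤ numCodewords n R * (2 ^ (-R) : ℝ) ^ ((n : ℝ) - 3) := by
  have hfloor := Nat.div_two_lt_floor (one_le_rpow one_le_two (by positivity : 0 ≤ (n : ℝ) * R))
  calc (1 : ℝ) / 2 ≤ (2 : ℝ) ^ (3 * R) / 2 := by
        gcongr; exact one_le_rpow one_le_two (by positivity)
    _ = (2 : ℝ) ^ ((n : ℝ) * R) / 2 * (2 ^ (-R) : ℝ) ^ ((n : ℝ) - 3) := by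
        rw [← rpow_mul zero_le_two, div_mul_eq_mul_div, ← rpow_add zero_lt_two]; ring_nf
    _ ≤ numCodewords n R * (2 ^ (-R) : ℝ) ^ ((n : ℝ) - 3) := by gcongr; exact hfloor.le

theorem eventually_measure_le_abs_sub_le {R a b : ℝ} (hR : 0 < R) (hb : b = 2 ^ (-R))
    (hab : a ^ 2 + b ^ 2 = 1) (ha : 0 < a) :
    ∀ᶠ n : ℕ in atTop, ∀ μ : Measure ℝ, IsProbabilityMeasure μ → μ (Icc (-1 : ℝ) 1)ᶜ = 0 →
      (∀ s ∈ Icc (-1 : ℝ) 1, μ (Iic s) = ENNReal.ofReal ((1 - Qfun n s) ^ numCodewords n R)) →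
      ∀ u : ℝ, 1 ≤ u * √n →
        μ {s | u ≤ |s - a|} ≤ ENNReal.ofReal (2 * exp (-(a / (16 * b ^ 2) * n * u))) := by
  have hb0 : 0 < b := hb ▸ by positivity
  filter_upwards [eventually_ge_atTop 6,
    eventually_mul_sqrt_le_exp (by positivity : 0 < 3 * (a / (16 * b ^ 2))) (2 ^ (3 * R)),
    eventually_mul_sqrt_le_exp (by positivity : 0 < a ^ 2 / 16) (9 / b ^ 4)]
    with n hn hM hexp μ _ hsupp hcdf u hu
  subst hb
  exact measure_le_abs_sub_le hn hab ha hb0 hsupp hcdf (half_le_numCodewords_mul_rpow n hR.le)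
    ((mul_le_mul_of_nonneg_right (numCodewords_mul_rpow_le n R) (sqrt_nonneg _)).trans hM)
    hexp hu

lemma rpow_le_one_add_sum_indicator {y p : ℝ} {N : ℕ} (hy : 0 ≤ y) (hyN : y < N) (hp : 0 ≤ p) :
    y ^ p ≤ 1 + ∑ j ∈ Finset.range N,
      (Ici ((j : ℝ) + 1)).indicator (fun _ => ((j : ℝ) + 2) ^ p) y := by
  have hterm : ∀ j ∈ Finset.range N,
      0 ≤ (Ici ((j : ℝ) + 1)).indicator (fun _ => ((j : ℝ) + 2) ^ p) y :=
    fun j _ => indicator_nonneg (fun _ _ => by positivity) _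
  rcases lt_or_ge y 1 with hy1 | hy1
  · linarith [rpow_le_one hy hy1.le hp, Finset.sum_nonneg hterm]
  obtain ⟨k, hk⟩ := Nat.exists_eq_add_of_le' (Nat.one_le_floor_iff y |>.2 hy1)
  have hkN : k < N := by
    have := (Nat.floor_lt hy).2 hyN
    omega
  have hfloor := Nat.floor_le hy
  have hfloor' := Nat.lt_floor_add_one y
  rw [hk] at hfloor hfloor'
  push_cast at hfloor hfloor'
  calc y ^ p ≤ ((k : ℝ) + 2) ^ p := by gcongr; linarith
    _ = (Ici ((k : ℝ) + 1)).indicator (fun _ => ((k : ℝ) + 2) ^ p) y :=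
        (indicator_of_mem (mem_Ici.2 hfloor) (fun _ => ((k : ℝ) + 2) ^ p)).symm
    _ ≤ ∑ j ∈ Finset.range N, (Ici ((j : ℝ) + 1)).indicator (fun _ => ((j : ℝ) + 2) ^ p) y :=
        Finset.single_le_sum (f := fun j : ℕ => (Ici ((j : ℝ) + 1)).indicator
          (fun _ => ((j : ℝ) + 2) ^ p) y) hterm (Finset.mem_range.2 hkN)
    _ ≤ _ := le_add_of_nonneg_left zero_le_one

lemma add_two_rpow_mul_exp_le {k p : ℝ} (hk : exp (-(k / 2)) ≤ 1 / 2) (hk0 : 0 < k) (hp : 0 < p)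
    (j : ℕ) :
    ((j : ℝ) + 2) ^ p * (2 * exp (-(k * ((j : ℝ) + 1)))) ≤ 2 * (4 * p / k) ^ p * (1 / 2) ^ (j + 1) :=
  calc ((j : ℝ) + 2) ^ p * (2 * exp (-(k * ((j : ℝ) + 1))))
      ≤ (2 * ((j : ℝ) + 1)) ^ p * (2 * exp (-(k * ((j : ℝ) + 1)))) := by gcongr; linarith
    _ = 2 * ((2 * ((j : ℝ) + 1)) ^ p * exp (-(k / 4 * (2 * ((j : ℝ) + 1)))))
          * exp (-(k / 2)) ^ (j + 1) := by
        rw [← exp_nat_mul, show exp (-(k * ((j : ℝ) + 1))) = exp (-(k / 4 * (2 * ((j : ℝ) + 1))))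
          * exp (((j + 1 : ℕ) : ℝ) * -(k / 2)) by rw [← exp_add]; push_cast; ring_nf]
        ring
    _ ≤ 2 * (p / (k / 4)) ^ p * (1 / 2) ^ (j + 1) := by
        gcongr
        exact rpow_mul_exp_neg_mul_le (by positivity) (by positivity) hp
    _ = 2 * (4 * p / k) ^ p * (1 / 2) ^ (j + 1) := by congr 3; field_simp

theorem integral_rpow_le_of_tail {Ω : Type*} [MeasurableSpace Ω] {μ : Measure Ω}
    [IsProbabilityMeasure μ] {Y : Ω → ℝ} {L k p : ℝ} (hY : Measurable Y) (hY0 : ∀ ω, 0 ≤ Y ω)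
    (hYL : ∀ᵐ ω ∂μ, Y ω ≤ L) (hk : exp (-(k / 2)) ≤ 1 / 2) (hp : 0 < p)
    (htail : ∀ t, 1 ≤ t → μ {ω | t ≤ Y ω} ≤ ENNReal.ofReal (2 * exp (-(k * t)))) :
    ∫ ω, Y ω ^ p ∂μ ≤ 1 + 2 * (4 * p / k) ^ p := by
  have hk0 : 0 < k := by
    by_contra! h
    linarith [one_le_exp (show 0 ≤ -(k / 2) by linarith)]
  set N := ⌊L⌋₊ + 1
  set A : ℕ → Set Ω := fun j => {ω | (j : ℝ) + 1 ≤ Y ω}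
  have hA : ∀ j, MeasurableSet (A j) := fun j => measurableSet_le measurable_const hY
  have hint : ∀ j, Integrable ((A j).indicator fun _ => ((j : ℝ) + 2) ^ p) μ := fun j =>
    (integrable_const _).indicator (hA j)
  have hpointwise : ∀ᵐ ω ∂μ, Y ω ^ p ≤
      1 + ∑ j ∈ Finset.range N, (A j).indicator (fun _ => ((j : ℝ) + 2) ^ p) ω := by
    filter_upwards [hYL] with ω hω
    exact rpow_le_one_add_sum_indicator (hY0 ω)
      (by push_cast [N]; linarith [Nat.lt_floor_add_one L]) hp.le
  have hterm (j : ℕ) : ((j : ℝ) + 2) ^ p * μ.real (A j) ≤ 2 * (4 * p / k) ^ p * (1 / 2) ^ (j + 1) :=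
    le_trans (by
      gcongr
      exact ENNReal.toReal_le_of_le_ofReal (by positivity)
        (htail _ (by linarith [j.cast_nonneg (α := ℝ)]))) (add_two_rpow_mul_exp_le hk hk0 hp j)
  have hgeom : ∑ j ∈ Finset.range N, (1 / 2 : ℝ) ^ (j + 1) ≤ 1 := by
    simp only [pow_succ, ← Finset.sum_mul]
    linarith [sum_geometric_two_le N]
  calc ∫ ω, Y ω ^ p ∂μ
      ≤ ∫ ω, 1 + ∑ j ∈ Finset.range N, (A j).indicator (fun _ => ((j : ℝ) + 2) ^ p) ω ∂μ :=
        integral_mono_of_nonneg (.of_forall fun ω => rpow_nonneg (hY0 ω) p)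
          ((integrable_const 1).add (integrable_finsetSum _ fun j _ => hint j)) hpointwise
    _ = 1 + ∑ j ∈ Finset.range N, ((j : ℝ) + 2) ^ p * μ.real (A j) := by
        rw [integral_add (integrable_const 1) (integrable_finsetSum _ fun j _ => hint j),
          integral_finsetSum _ fun j _ => hint j]
        simp [integral_indicator_const _ (hA _), mul_comm]
    _ ≤ 1 + 2 * (4 * p / k) ^ p * ∑ j ∈ Finset.range N, (1 / 2 : ℝ) ^ (j + 1) := by
        rw [Finset.mul_sum]
        gcongr 1 + ?_
        exact Finset.sum_le_sum fun j _ => hterm j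
    _ ≤ 1 + 2 * (4 * p / k) ^ p := by
        have : 0 ≤ 2 * (4 * p / k) ^ p := by positivity
        nlinarith

/-- The paper's `Δ₁`, for `(a, b) = (√(1 - 2^{-2R}), 2^{-R})`. -/
noncomputable def circleDist (a b s : ℝ) : ℝ := √((s - a) ^ 2 + (√(1 - s ^ 2) - b) ^ 2)

section CircleDist

variable {a b s : ℝ}

lemma circleDist_nonneg : 0 ≤ circleDist a b s := sqrt_nonneg _

lemma circleDist_le_two (hab : a ^ 2 + b ^ 2 = 1) (hs : s ∈ Icc (-1 : ℝ) 1) :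
    circleDist a b s ≤ 2 := by
  have hy := sq_sqrt (show 0 ≤ 1 - s ^ 2 by nlinarith [hs.1, hs.2])
  refine sqrt_le_iff.2 ⟨zero_le_two, ?_⟩
  nlinarith [sq_nonneg (s + a), sq_nonneg (√(1 - s ^ 2) + b)]

lemma circleDist_le_mul_abs (hab : a ^ 2 + b ^ 2 = 1) (hb : 0 < b) (hs : s ∈ Icc (-1 : ℝ) 1) :
    circleDist a b s ≤ √(1 + 4 / b ^ 2) * |s - a| := by
  set y := √(1 - s ^ 2)
  have hy0 : 0 ≤ y := sqrt_nonneg _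
  have hy : y ^ 2 = 1 - s ^ 2 := sq_sqrt (by nlinarith [hs.1, hs.2])
  -- `(y - b)(y + b) = -(s - a)(s + a)`, with `y + b ≥ b` and `|s + a| ≤ 2`
  have hfactor : ((y - b) * (y + b)) ^ 2 = ((s - a) * (s + a)) ^ 2 := by
    have : (y - b) * (y + b) = -((s - a) * (s + a)) := by linear_combination hy - hab
    rw [this, neg_sq]
  have hsa : (s + a) ^ 2 ≤ 4 := by nlinarith [hs.1, hs.2, sq_nonneg (s - a)]
  have hyb : (y - b) ^ 2 * b ^ 2 ≤ (s - a) ^ 2 * 4 :=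
    calc (y - b) ^ 2 * b ^ 2 ≤ (y - b) ^ 2 * (y + b) ^ 2 := by gcongr; linarith
      _ = (s - a) ^ 2 * (s + a) ^ 2 := by rw [← mul_pow, hfactor, mul_pow]
      _ ≤ (s - a) ^ 2 * 4 := by gcongr
  have hyb' : (y - b) ^ 2 ≤ 4 * (s - a) ^ 2 / b ^ 2 := by
    rw [le_div_iff₀ (by positivity)]; linarith
  rw [circleDist, ← sqrt_sq_eq_abs, ← sqrt_mul (by positivity)]
  refine sqrt_le_sqrt ?_
  rw [add_mul, one_mul, div_mul_eq_mul_div]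
  linarith

end CircleDist

section Moments

variable {μ : Measure ℝ} {n : ℕ} {a b p : ℝ}

lemma integral_circleDist_rpow_nonneg : 0 ≤ ∫ s, (√n * circleDist a b s) ^ p ∂μ :=
  integral_nonneg fun _ => rpow_nonneg (mul_nonneg (sqrt_nonneg _) circleDist_nonneg) p

variable [IsProbabilityMeasure μ]

lemma integral_circleDist_rpow_le_two (hab : a ^ 2 + b ^ 2 = 1) (hsupp : μ (Icc (-1 : ℝ) 1)ᶜ = 0)
    (hp : 1 ≤ p) : (∫ s, (√n * circleDist a b s) ^ p ∂μ) ^ (1 / p) ≤ 2 * √n := by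
  have hmoment : ∫ s, (√n * circleDist a b s) ^ p ∂μ ≤ 1 * (2 * √n) ^ p :=
    calc ∫ s, (√n * circleDist a b s) ^ p ∂μ ≤ ∫ _, (2 * √n) ^ p ∂μ := by
          refine integral_mono_of_nonneg
            (.of_forall fun s => rpow_nonneg (mul_nonneg (sqrt_nonneg _) circleDist_nonneg) p)
            (integrable_const _) ?_
          filter_upwards [ae_iff.2 hsupp] with s hs
          rw [mul_comm 2]
          gcongr
          · exact mul_nonneg (sqrt_nonneg _) circleDist_nonneg
          · exact circleDist_le_two hab hs
      _ = 1 * (2 * √n) ^ p := by simp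
  simpa using rpow_one_div_le_of_le_mul_rpow integral_circleDist_rpow_nonneg le_rfl
    (by positivity) hp hmoment

lemma integral_sqrt_mul_abs_sub_rpow_le (ha : |a| ≤ 1) (hsupp : μ (Icc (-1 : ℝ) 1)ᶜ = 0)
    {k : ℝ} (hk : 2 ≤ exp (k * √n / 2))
    (hconc : ∀ u : ℝ, 1 ≤ u * √n → μ {s | u ≤ |s - a|} ≤ ENNReal.ofReal (2 * exp (-(k * n * u))))
    (hp : 0 < p) : ∫ s, (√n * |s - a|) ^ p ∂μ ≤ 1 + 2 * (4 * p / (k * √n)) ^ p := by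
  have hkn : 0 < k * √n := by
    by_contra! h
    linarith [exp_le_one_iff.2 (show k * √n / 2 ≤ 0 by linarith)]
  have hn : 0 < √n := (sqrt_nonneg _).lt_of_ne fun h => by simp [← h] at hkn
  refine integral_rpow_le_of_tail (L := 2 * √n) (by fun_prop) (fun s => by positivity) ?_ ?_ hp
    fun t ht => ?_
  · filter_upwards [ae_iff.2 hsupp] with s hs
    rw [mul_comm 2]
    gcongr
    exact (abs_sub _ _).trans (by linarith [abs_le.2 ⟨hs.1, hs.2⟩])
  · rw [exp_neg, inv_le_comm₀ (exp_pos _) (by norm_num)]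
    linarith
  · have hset : {s | t ≤ √n * |s - a|} = {s | t / √n ≤ |s - a|} := by
      ext s; rw [mem_ofPred_eq, mem_ofPred_eq, div_le_iff₀ hn, mul_comm]
    have hexp : k * n * (t / √n) = k * √n * t := by
      rw [show k * n * (t / √n) = k * t * (n / √n) by ring, div_sqrt]
      ring
    rw [hset, ← hexp]
    exact hconc (t / √n) (by rwa [div_mul_cancel₀ _ hn.ne'])

lemma integral_circleDist_rpow_le_mul (hab : a ^ 2 + b ^ 2 = 1) (hb : 0 < b)
    (hsupp : μ (Icc (-1 : ℝ) 1)ᶜ = 0) (hp : 0 ≤ p) :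
    ∫ s, (√n * circleDist a b s) ^ p ∂μ ≤
      √(1 + 4 / b ^ 2) ^ p * ∫ s, (√n * |s - a|) ^ p ∂μ := by
  have ha : |a| ≤ 1 := abs_le_one_iff_mul_self_le_one.2 (by nlinarith)
  have hint : Integrable (fun s => (√n * |s - a|) ^ p) μ := by
    refine .of_bound ((continuous_rpow_const hp).comp (by fun_prop)).aestronglyMeasurable
      ((2 * √n) ^ p) ?_
    filter_upwards [ae_iff.2 hsupp] with s hs
    rw [norm_of_nonneg (by positivity), mul_comm 2]
    gcongr
    exact (abs_sub _ _).trans (by linarith [abs_le.2 ⟨hs.1, hs.2⟩])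
  rw [← integral_const_mul]
  refine integral_mono_of_nonneg
    (.of_forall fun s => rpow_nonneg (mul_nonneg (sqrt_nonneg _) circleDist_nonneg) p)
    (hint.const_mul _) ?_
  filter_upwards [ae_iff.2 hsupp] with s hs
  rw [← mul_rpow (sqrt_nonneg _) (by positivity)]
  refine rpow_le_rpow (mul_nonneg (sqrt_nonneg _) circleDist_nonneg) ?_ hp
  calc √n * circleDist a b s ≤ √n * (√(1 + 4 / b ^ 2) * |s - a|) := by
        gcongr; exact circleDist_le_mul_abs hab hb hs
    _ = √(1 + 4 / b ^ 2) * (√n * |s - a|) := by ring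

lemma integral_circleDist_rpow_le (hab : a ^ 2 + b ^ 2 = 1) (hb : 0 < b)
    (hsupp : μ (Icc (-1 : ℝ) 1)ᶜ = 0) {k : ℝ} (hk : 2 ≤ exp (k * √n / 2))
    (hconc : ∀ u : ℝ, 1 ≤ u * √n → μ {s | u ≤ |s - a|} ≤ ENNReal.ofReal (2 * exp (-(k * n * u))))
    (hp : 1 ≤ p) (hpn : p ≤ n) :
    (∫ s, (√n * circleDist a b s) ^ p ∂μ) ^ (1 / p) ≤
      3 * (√(1 + 4 / b ^ 2) * max 1 (4 / k)) * √p := by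
  set K := √(1 + 4 / b ^ 2)
  set X := max 1 (4 / k) * √p
  have hk0 : 0 < k := by
    by_contra! h
    linarith [exp_le_one_iff.2 (show k * √n / 2 ≤ 0 by nlinarith [sqrt_nonneg (n : ℝ)])]
  have hratio : 4 * p / (k * √n) ≤ X := by
    rw [div_le_iff₀ (by have := sqrt_pos.2 (by linarith : (0 : ℝ) < n); positivity)]
    calc 4 * p = 4 * (√p * √p) := by rw [mul_self_sqrt (by linarith)]
      _ ≤ 4 * (√p * √n) := by gcongr
      _ = 4 / k * √p * (k * √n) := by field_simp
      _ ≤ X * (k * √n) := by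
          gcongr; exact mul_le_mul_of_nonneg_right (le_max_right _ _) (sqrt_nonneg _)
  have hX : 1 ≤ X ^ p := one_le_rpow
    (one_le_mul_of_one_le_of_one_le (le_max_left _ _) (one_le_sqrt.2 hp)) (by linarith)
  have hY := integral_sqrt_mul_abs_sub_rpow_le
    (abs_le_one_iff_mul_self_le_one.2 (by nlinarith)) hsupp hk hconc (by linarith : 0 < p)
  refine (rpow_one_div_le_of_le_mul_rpow (X := K * X) integral_circleDist_rpow_nonneg
    (by norm_num : (1 : ℝ) ≤ 3) (by positivity) hp ?_).trans_eq (by ring)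
  calc ∫ s, (√n * circleDist a b s) ^ p ∂μ ≤ K ^ p * ∫ s, (√n * |s - a|) ^ p ∂μ :=
        integral_circleDist_rpow_le_mul hab hb hsupp (by linarith)
    _ ≤ K ^ p * (1 + 2 * X ^ p) := by
        gcongr
        exact hY.trans (by gcongr)
    _ ≤ K ^ p * (3 * X ^ p) := by gcongr; linarith
    _ = 3 * (K * X) ^ p := by rw [mul_rpow (sqrt_nonneg _) (by positivity)]; ring

end Moments

/-- Let `S` have CDF `(1 - Q_n(s))^M` on `[-1,1]` with
`M = ⌊2^{nR}⌋`, and let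
`Δ₁ = √((S - √(1-2^{-2R}))² + (√(1-S²) - 2^{-R})²)`. Then for all `p ≥ 1`,
`(E[(√n·Δ₁)^p])^{1/p} ≤ C√p` with `C` depending only on `R`. -/
theorem stmt13 (R : ℝ) (hR : 0 < R) :
    ∃ C : ℝ, 0 < C ∧
      ∀ (n : ℕ), 2 ≤ n →
      ∀ μ : Measure ℝ, IsProbabilityMeasure μ →
        μ (Set.Icc (-1 : ℝ) 1)ᶜ = 0 →
        (∀ s ∈ Set.Icc (-1 : ℝ) 1,
          μ (Set.Iic s) = ENNReal.ofReal ((1 - Qfun n s) ^ numCodewords n R)) →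
        ∀ p : ℝ, 1 ≤ p →
          (∫ s, (Real.sqrt n *
              Real.sqrt ((s - Real.sqrt (1 - 2 ^ (-(2 * R)))) ^ 2 +
                (Real.sqrt (1 - s ^ 2) - 2 ^ (-R)) ^ 2)) ^ p ∂μ) ^ (1 / p) ≤
            C * Real.sqrt p := by
  set b : ℝ := 2 ^ (-R) with hb
  have hb0 : 0 < b := by positivity
  have hb1 : b < 1 := rpow_lt_one_of_one_lt_of_neg one_lt_two (by linarith)
  have hb2 : (2 : ℝ) ^ (-(2 * R)) = b ^ 2 := by
    rw [hb, ← rpow_natCast, ← rpow_mul zero_le_two]; ring_nf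
  set a := √(1 - b ^ 2)
  have hab : a ^ 2 + b ^ 2 = 1 := by rw [sq_sqrt (by nlinarith)]; ring
  have ha : 0 < a := sqrt_pos.2 (by nlinarith)
  set k := a / (16 * b ^ 2)
  obtain ⟨n₀, hn₀⟩ := eventually_atTop.1 ((eventually_measure_le_abs_sub_le hR hb hab ha).and
    (eventually_mul_sqrt_le_exp (by positivity : 0 < k / 2) 2))
  refine ⟨max (3 * (√(1 + 4 / b ^ 2) * max 1 (4 / k))) (2 * √(n₀ + 1)), by positivity, ?_⟩
  intro n hn μ hμ hsupp hcdf p hp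
  rw [hb2]
  change (∫ s, (√n * circleDist a b s) ^ p ∂μ) ^ (1 / p) ≤ _
  by_cases hlarge : n₀ ≤ n ∧ p ≤ n
  · obtain ⟨hconc, hexp⟩ := hn₀ n hlarge.1
    have hsn : 1 ≤ √n := one_le_sqrt.2 (by linarith)
    refine (integral_circleDist_rpow_le hab hb0 hsupp
      (by rw [mul_div_right_comm]; linarith) (hconc μ hμ hsupp hcdf) hp hlarge.2).trans ?_
    gcongr
    exact le_max_left _ _
  · have hnp : (n : ℝ) ≤ (n₀ + 1) * p := by
      rcases not_and_or.1 hlarge with h | h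
      · nlinarith [(by exact_mod_cast (not_le.1 h).le : (n : ℝ) ≤ n₀)]
      · nlinarith [not_le.1 h, (n₀.cast_nonneg : (0 : ℝ) ≤ n₀)]
    calc _ ≤ 2 * √n := integral_circleDist_rpow_le_two hab hsupp hp
      _ ≤ 2 * √(n₀ + 1) * √p := by
          rw [mul_assoc, ← sqrt_mul (by positivity)]
          gcongr
      _ ≤ _ := by gcongr; exact le_max_right _ _
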